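/- Suppose M satisfies the D-RIP with constant δ := δ_{(3ζ+1)k} and x_p solves the constrained least squares on the support T̃^t. Let x^t = P_{S_{ζk}(x_p)} x_p where S_{ζk} is a near-optimal support selection with constant C_k, and x has k-sparse representation supported on T. Then ‖x^t − x‖₂ ≤ ((1+√C_k)/√(1−δ²))·‖Q_{T̃^t}(x_p − x)‖₂ + ((1+√C_k)/(1−δ))·‖P_{T_e}M*e‖₂. -/

import Mathlib

open Matrix
open scoped Classical

noncomputable section

/-- `α` has at most `k` nonzero entries. -/
def sparse {n : ℕ} (k : ℕ) (α : EuclideanSpace ℝ (Fin n)) : Prop :=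
  (Finset.univ.filter fun i => α i ≠ 0).card ≤ k

/-- The D-RIP of order `k` with constant `δ`:
`(1-δ)‖Dα‖² ≤ ‖MDα‖² ≤ (1+δ)‖Dα‖²` for all `k`-sparse `α`. -/
def DRIP {m d n : ℕ} (M : Matrix (Fin m) (Fin d) ℝ) (D : Matrix (Fin d) (Fin n) ℝ)
    (k : ℕ) (δ : ℝ) : Prop :=
  ∀ α : EuclideanSpace ℝ (Fin n), sparse k α →
    (1 - δ) * ‖Matrix.toEuclideanLin D α‖ ^ 2 ≤
        ‖Matrix.toEuclideanLin M (Matrix.toEuclideanLin D α)‖ ^ 2 ∧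
      ‖Matrix.toEuclideanLin M (Matrix.toEuclideanLin D α)‖ ^ 2 ≤
        (1 + δ) * ‖Matrix.toEuclideanLin D α‖ ^ 2

/-- The span of the columns of `D` indexed by `T`, i.e. `range(D_T)`. -/
def colSpan {d n : ℕ} (D : Matrix (Fin d) (Fin n) ℝ) (T : Finset (Fin n)) :
    Submodule ℝ (EuclideanSpace ℝ (Fin d)) :=
  Submodule.span ℝ
    {v : EuclideanSpace ℝ (Fin d) | ∃ i ∈ T, v = (WithLp.equiv 2 (Fin d → ℝ)).symm (fun j => D j i)}

/-- The orthogonal projection onto a subspace `K`, as a map of the whole space. -/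
def projOnto {d : ℕ} (K : Submodule ℝ (EuclideanSpace ℝ (Fin d))) :
    EuclideanSpace ℝ (Fin d) →L[ℝ] EuclideanSpace ℝ (Fin d) :=
  K.subtypeL.comp K.orthogonalProjection

/-! Write `z = x_p - x = u + w` with `u = P_{T̃} z` and `w = Q_{T̃} z`; both lie in the column span
over `T̃ ∪ T`, on which `M` is a `δ`-near-isometry. Least-squares optimality makes the residual
orthogonal to `M (range D_{T̃})`, so `⟪Mu, Mz⟫ = ⟪u, P_{T̃} M*e⟫ ≤ ‖u‖ ‖P_{T_e} M*e‖`. The RIP along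
the line `u + t w` controls the cross term `⟪Mu, Mw⟫`, which gives
`‖u‖ ≤ δ/√(1-δ²) ‖w‖ + ‖P_{T_e} M*e‖/(1-δ)`, and Pythagoras turns this into
`‖z‖ ≤ ‖w‖/√(1-δ²) + ‖P_{T_e} M*e‖/(1-δ)`. Near-optimality of `S` gives `‖x^t - x_p‖ ≤ √C ‖z‖`. -/

open scoped RealInnerProductSpace

lemma sq_le_mul_of_forall_quadratic_nonneg {A B C : ℝ}
    (h : ∀ t : ℝ, 0 ≤ A * (t * t) + 2 * B * t + C) : B ^ 2 ≤ A * C := by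
  have := discrim_le_zero h
  rw [discrim] at this
  linarith

lemma le_of_cross_term_bound {δ p q a c E : ℝ} (hδ0 : 0 ≤ δ) (hδ1 : δ < 1) (hp : 0 ≤ p)
    (hq : 0 ≤ q) (hE : 0 ≤ E) (ha : (1 - δ) * p ^ 2 ≤ a)
    (hc : c ^ 2 * p ^ 2 ≤ q ^ 2 * ((1 + δ) * p ^ 2 - a) * (a - (1 - δ) * p ^ 2))
    (hac : a + c ≤ p * E) :
    p ≤ δ / √(1 - δ ^ 2) * q + E / (1 - δ) := by
  have h1δ : 0 < 1 - δ := by linarith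
  have hs2 : √(1 - δ ^ 2) ^ 2 = 1 - δ ^ 2 := Real.sq_sqrt (by nlinarith)
  set s := √(1 - δ ^ 2)
  have hs : 0 < s := Real.sqrt_pos.mpr (by nlinarith)
  have ha0 : 0 ≤ a := le_trans (by positivity) ha
  have hspc : |s * p * c| ≤ δ * q * a := by
    refine abs_le_of_sq_le_sq ?_ (by positivity)
    -- `(1 - δ²) ((1+δ)p² - a) (a - (1-δ)p²) = δ² a² - (a - (1-δ²)p²)²`
    have hgap : s ^ 2 * (((1 + δ) * p ^ 2 - a) * (a - (1 - δ) * p ^ 2)) ≤ δ ^ 2 * a ^ 2 := by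
      rw [hs2]; nlinarith [sq_nonneg (a - (1 - δ ^ 2) * p ^ 2)]
    calc (s * p * c) ^ 2 = s ^ 2 * (c ^ 2 * p ^ 2) := by ring
      _ ≤ s ^ 2 * (q ^ 2 * ((1 + δ) * p ^ 2 - a) * (a - (1 - δ) * p ^ 2)) := by gcongr
      _ ≤ q ^ 2 * (δ ^ 2 * a ^ 2) := by nlinarith [sq_nonneg q]
      _ = (δ * q * a) ^ 2 := by ring
  have hsa : a * (s * p - δ * q) ≤ s * p ^ 2 * E := by
    nlinarith [neg_abs_le (s * p * c), mul_le_mul_of_nonneg_left hac (mul_nonneg hs.le hp)]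
  rcases le_or_gt (s * p) (δ * q) with hsp | hsp
  · have : p ≤ δ / s * q := by rw [div_mul_eq_mul_div, le_div_iff₀ hs]; linarith
    linarith [div_nonneg hE h1δ.le]
  · have hp0 : 0 < p := pos_of_mul_pos_right ((mul_nonneg hδ0 hq).trans_lt hsp) hs.le
    have hpE : (1 - δ) * (s * p - δ * q) ≤ s * E := by
      have : p ^ 2 * ((1 - δ) * (s * p - δ * q)) ≤ p ^ 2 * (s * E) := by
        nlinarith [mul_le_mul_of_nonneg_right ha (sub_nonneg.mpr hsp.le)]
      exact le_of_mul_le_mul_left this (by positivity)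
    rw [div_mul_eq_mul_div, div_add_div _ _ hs.ne' h1δ.ne', le_div_iff₀ (by positivity)]
    nlinarith

lemma sqrt_sq_add_sq_le {δ p q F : ℝ} (hδ0 : 0 ≤ δ) (hδ1 : δ < 1) (hp0 : 0 ≤ p) (hq : 0 ≤ q)
    (hF : 0 ≤ F) (hp : p ≤ δ / √(1 - δ ^ 2) * q + F) :
    √(p ^ 2 + q ^ 2) ≤ q / √(1 - δ ^ 2) + F := by
  have hs2 : √(1 - δ ^ 2) ^ 2 = 1 - δ ^ 2 := Real.sq_sqrt (by nlinarith)
  set s := √(1 - δ ^ 2)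
  have hs : 0 < s := Real.sqrt_pos.mpr (by nlinarith)
  have hp' : p ≤ δ * (q / s) + F := by rwa [div_mul_eq_mul_div, mul_div_assoc] at hp
  refine Real.sqrt_le_iff.mpr ⟨by positivity, ?_⟩
  calc p ^ 2 + q ^ 2 ≤ (δ * (q / s) + F) ^ 2 + s ^ 2 * (q / s) ^ 2 := by
        rw [← mul_pow, mul_div_cancel₀ q hs.ne']; gcongr
    _ = (q / s + F) ^ 2 - 2 * (1 - δ) * (q / s) * F := by rw [hs2]; ring
    _ ≤ (q / s + F) ^ 2 := by
        have h1δ : 0 ≤ 1 - δ := by linarith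
        have : 0 ≤ (1 - δ) * (q / s) * F := by positivity
        linarith

section RestrictedIsometry

variable {F G : Type*} [NormedAddCommGroup F] [InnerProductSpace ℝ F]
  [NormedAddCommGroup G] [InnerProductSpace ℝ G]

def RIPOn (L : F →ₗ[ℝ] G) (V : Submodule ℝ F) (δ : ℝ) : Prop :=
  ∀ v ∈ V, (1 - δ) * ‖v‖ ^ 2 ≤ ‖L v‖ ^ 2 ∧ ‖L v‖ ^ 2 ≤ (1 + δ) * ‖v‖ ^ 2

namespace RIPOn

variable {L : F →ₗ[ℝ] G} {V : Submodule ℝ F} {δ : ℝ}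

lemma eq_zero_of_neg (hL : RIPOn L V δ) (hδ : δ < 0) {v : F} (hv : v ∈ V) : v = 0 := by
  obtain ⟨hlow, hup⟩ := hL v hv
  have : ‖v‖ ^ 2 ≤ 0 := by nlinarith
  simpa using this

-- Both RIP bounds along the line `t ↦ u + t • w` are quadratic inequalities in `t`; their
-- discriminant conditions combine into this bound.
lemma inner_sq_mul_le (hL : RIPOn L V δ) {u w : F} (hu : u ∈ V) (hw : w ∈ V)
    (huw : ⟪u, w⟫ = 0) :
    ⟪L u, L w⟫ ^ 2 * ‖u‖ ^ 2 ≤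
      ‖w‖ ^ 2 * ((1 + δ) * ‖u‖ ^ 2 - ‖L u‖ ^ 2) * (‖L u‖ ^ 2 - (1 - δ) * ‖u‖ ^ 2) := by
  have hnorm (t : ℝ) : ‖u + t • w‖ ^ 2 = ‖u‖ ^ 2 + t ^ 2 * ‖w‖ ^ 2 := by
    rw [norm_add_sq_real, real_inner_smul_right, huw, norm_smul, Real.norm_eq_abs, mul_pow,
      sq_abs]
    ring
  have hmap (t : ℝ) : ‖L (u + t • w)‖ ^ 2 =
      ‖L u‖ ^ 2 + 2 * ⟪L u, L w⟫ * t + t ^ 2 * ‖L w‖ ^ 2 := by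
    rw [map_add, map_smul, norm_add_sq_real, real_inner_smul_right, norm_smul, Real.norm_eq_abs,
      mul_pow, sq_abs]
    ring
  have hrip (t : ℝ) := hL _ (V.add_mem hu (V.smul_mem t hw))
  have hlow := sq_le_mul_of_forall_quadratic_nonneg (A := ‖L w‖ ^ 2 - (1 - δ) * ‖w‖ ^ 2)
      (B := ⟪L u, L w⟫) (C := ‖L u‖ ^ 2 - (1 - δ) * ‖u‖ ^ 2) fun t => by
    have := (hrip t).1; rw [hnorm, hmap] at this; nlinarith
  have hup := sq_le_mul_of_forall_quadratic_nonneg (A := (1 + δ) * ‖w‖ ^ 2 - ‖L w‖ ^ 2)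
      (B := -⟪L u, L w⟫) (C := (1 + δ) * ‖u‖ ^ 2 - ‖L u‖ ^ 2) fun t => by
    have := (hrip t).2; rw [hnorm, hmap] at this; nlinarith
  obtain ⟨hu₁, hu₂⟩ := hL u hu
  rcases le_or_gt δ 0 with hδ | hδ
  · have hX : ‖L u‖ ^ 2 - (1 - δ) * ‖u‖ ^ 2 = 0 := by nlinarith [sq_nonneg ‖u‖]
    have hc : ⟪L u, L w⟫ ^ 2 = 0 := le_antisymm (by simpa [hX] using hlow) (sq_nonneg _)
    simp [hX, hc]
  · refine le_of_mul_le_mul_left ?_ (by positivity : 0 < 2 * δ)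
    nlinarith

theorem norm_add_le_of_inner_le (hL : RIPOn L V δ) (hδ : δ < 1) {u w : F} (hu : u ∈ V) (hw : w ∈ V)
    (huw : ⟪u, w⟫ = 0) {E : ℝ} (hE : 0 ≤ E) (hcorr : ⟪L u, L (u + w)⟫ ≤ ‖u‖ * E) :
    ‖u + w‖ ≤ ‖w‖ / √(1 - δ ^ 2) + E / (1 - δ) := by
  have h1δ : 0 < 1 - δ := by linarith
  rcases lt_or_ge δ 0 with hneg | hδ0
  · simp only [hL.eq_zero_of_neg hneg hu, hL.eq_zero_of_neg hneg hw, add_zero, norm_zero,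
      zero_div, zero_add]
    positivity
  have hu_bound : ‖u‖ ≤ δ / √(1 - δ ^ 2) * ‖w‖ + E / (1 - δ) := by
    rw [map_add, inner_add_right, real_inner_self_eq_norm_sq] at hcorr
    exact le_of_cross_term_bound hδ0 hδ (norm_nonneg u) (norm_nonneg w) hE (hL u hu).1
      (hL.inner_sq_mul_le hu hw huw) hcorr
  have hpyth : ‖u + w‖ = √(‖u‖ ^ 2 + ‖w‖ ^ 2) := by
    rw [norm_add_eq_sqrt_iff_real_inner_eq_zero.2 huw, sq, sq]
  rw [hpyth]
  exact sqrt_sq_add_sq_le hδ0 hδ (norm_nonneg u) (norm_nonneg w) (by positivity) hu_bound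

end RIPOn

lemma inner_sub_eq_zero_of_forall_norm_le {W : Submodule ℝ G} {r w₀ : G} (hw₀ : w₀ ∈ W)
    (hmin : ∀ w ∈ W, ‖r - w₀‖ ≤ ‖r - w‖) : ∀ w ∈ W, ⟪r - w₀, w⟫ = 0 := by
  rw [← W.norm_eq_iInf_iff_real_inner_eq_zero hw₀]
  exact le_antisymm (le_ciInf fun w => hmin w w.2)
    (ciInf_le ⟨0, Set.forall_mem_range.mpr fun _ => norm_nonneg _⟩ (⟨w₀, hw₀⟩ : W))

lemma inner_map_sub_le_of_forall_norm_le [FiniteDimensional ℝ F] [FiniteDimensional ℝ G]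
    {L : F →ₗ[ℝ] G} {K : Submodule ℝ F} {x xp u : F} {e : G} (hxp : xp ∈ K)
    (hmin : ∀ v ∈ K, ‖L x + e - L xp‖ ≤ ‖L x + e - L v‖) (hu : u ∈ K) :
    ⟪L u, L (xp - x)⟫ ≤ ‖u‖ * ‖K.starProjection (LinearMap.adjoint L e)‖ := by
  have horth := inner_sub_eq_zero_of_forall_norm_le (W := K.map L)
    (Submodule.mem_map_of_mem hxp) (by rintro _ ⟨v, hv, rfl⟩; exact hmin v hv)
    (L u) (Submodule.mem_map_of_mem hu)
  calc ⟪L u, L (xp - x)⟫ = ⟪L u, e⟫ - ⟪L x + e - L xp, L u⟫ := by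
        rw [show L (xp - x) = e - (L x + e - L xp) by rw [map_sub]; abel, inner_sub_right,
          real_inner_comm (L u)]
    _ = ⟪u, K.starProjection (LinearMap.adjoint L e)⟫ := by
        rw [horth, sub_zero, ← LinearMap.adjoint_inner_right,
          ← K.starProjection_eq_self_iff.mpr hu, K.inner_starProjection_left_eq_right,
          K.starProjection_eq_self_iff.mpr hu]
    _ ≤ ‖u‖ * ‖K.starProjection (LinearMap.adjoint L e)‖ := real_inner_le_norm _ _

end RestrictedIsometry

section ColumnSpan

variable {m d n : ℕ}

lemma sparse_of_supported {β : EuclideanSpace ℝ (Fin n)} {U : Finset (Fin n)} {k : ℕ}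
    (hβ : ∀ i ∉ U, β i = 0) (hU : U.card ≤ k) : sparse k β := by
  refine (Finset.card_le_card fun i hi => ?_).trans hU
  by_contra h
  exact (Finset.mem_filter.mp hi).2 (hβ i h)

lemma toEuclideanLin_mem_colSpan (D : Matrix (Fin d) (Fin n) ℝ) {T : Finset (Fin n)}
    {β : EuclideanSpace ℝ (Fin n)} (hβ : ∀ i ∉ T, β i = 0) :
    Matrix.toEuclideanLin D β ∈ colSpan D T := by
  have hsum : Matrix.toEuclideanLin D β =
      ∑ i ∈ T, β i • (WithLp.equiv 2 (Fin d → ℝ)).symm (fun j => D j i) := by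
    ext j
    simp only [Matrix.toLpLin_apply, Matrix.mulVec, dotProduct, WithLp.ofLp_sum]
    simp only [WithLp.ofLp_smul, WithLp.equiv_symm_apply, Finset.sum_apply, Pi.smul_apply,
      smul_eq_mul]
    rw [← Finset.sum_subset (Finset.subset_univ T) fun i _ hi => by simp [hβ i hi]]
    simp only [mul_comm]
  rw [hsum]
  exact Submodule.sum_mem _ fun i hi => Submodule.smul_mem _ _ (Submodule.subset_span ⟨i, hi, rfl⟩)

lemma mem_colSpan_iff {D : Matrix (Fin d) (Fin n) ℝ} {T : Finset (Fin n)}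
    {v : EuclideanSpace ℝ (Fin d)} :
    v ∈ colSpan D T ↔
      ∃ β : EuclideanSpace ℝ (Fin n), (∀ i ∉ T, β i = 0) ∧ v = Matrix.toEuclideanLin D β := by
  refine ⟨fun hv => ?_, fun ⟨β, hβ, hv⟩ => hv ▸ toEuclideanLin_mem_colSpan D hβ⟩
  induction hv using Submodule.span_induction with
  | mem w hw =>
    obtain ⟨i, hi, rfl⟩ := hw
    refine ⟨EuclideanSpace.single i 1, fun i' hi' => ?_, ?_⟩
    · simp [show i' ≠ i by rintro rfl; exact hi' hi]
    · ext j
      simp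
  | zero => exact ⟨0, fun _ _ => rfl, by simp⟩
  | add _ _ _ _ h₁ h₂ =>
    obtain ⟨β₁, hβ₁, rfl⟩ := h₁
    obtain ⟨β₂, hβ₂, rfl⟩ := h₂
    exact ⟨β₁ + β₂, fun i hi => by simp [hβ₁ i hi, hβ₂ i hi], (map_add _ _ _).symm⟩
  | smul r _ _ h =>
    obtain ⟨β, hβ, rfl⟩ := h
    exact ⟨r • β, fun i hi => by simp [hβ i hi], (map_smul _ _ _).symm⟩

lemma colSpan_mono (D : Matrix (Fin d) (Fin n) ℝ) {T U : Finset (Fin n)} (h : T ⊆ U) :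
    colSpan D T ≤ colSpan D U :=
  Submodule.span_mono fun _ ⟨i, hi, hv⟩ => ⟨i, h hi, hv⟩

lemma DRIP.ripOn_colSpan {M : Matrix (Fin m) (Fin d) ℝ} {D : Matrix (Fin d) (Fin n) ℝ} {s : ℕ}
    {δ : ℝ} (h : DRIP M D s δ) {U : Finset (Fin n)} (hU : U.card ≤ s) :
    RIPOn (Matrix.toEuclideanLin M) (colSpan D U) δ := by
  intro v hv
  obtain ⟨β, hβ, rfl⟩ := mem_colSpan_iff.mp hv
  exact h β (sparse_of_supported hβ hU)

end ColumnSpan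

lemma norm_sub_le_one_add_sqrt_mul {E : Type*} [SeminormedAddCommGroup E] {a b c : E} {C : ℝ}
    (hC : 0 ≤ C) (h : ‖b - a‖ ^ 2 ≤ C * ‖c - b‖ ^ 2) : ‖a - c‖ ≤ (1 + √C) * ‖b - c‖ := by
  have hab : ‖a - b‖ ≤ √C * ‖b - c‖ := by
    rw [norm_sub_rev, norm_sub_rev b c, ← Real.sqrt_sq (norm_nonneg (b - a)),
      ← Real.sqrt_sq (norm_nonneg (c - b)), ← Real.sqrt_mul hC]
    exact Real.sqrt_le_sqrt h
  calc ‖a - c‖ ≤ ‖a - b‖ + ‖b - c‖ := norm_sub_le_norm_sub_add_norm_sub a b c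
    _ ≤ (1 + √C) * ‖b - c‖ := by linarith

theorem stmt14_general {m d n ζ k : ℕ}
    (M : Matrix (Fin m) (Fin d) ℝ) (D : Matrix (Fin d) (Fin n) ℝ)
    (δ : ℝ) (hδ : δ < 1) (hrip : DRIP M D ((3 * ζ + 1) * k) δ)
    (T : Finset (Fin n)) (hT : T.card ≤ k)
    (α : EuclideanSpace ℝ (Fin n)) (hα : ∀ i ∉ T, α i = 0)
    (x : EuclideanSpace ℝ (Fin d)) (hx : x = Matrix.toEuclideanLin D α)
    (e : EuclideanSpace ℝ (Fin m)) (y : EuclideanSpace ℝ (Fin m))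
    (hy : y = Matrix.toEuclideanLin M x + e)
    (Ttil : Finset (Fin n)) (hTtil : Ttil.card ≤ 3 * ζ * k)
    (xp : EuclideanSpace ℝ (Fin d))
    -- `x_p` is a minimizer of the constrained least-squares problem on `T̃^t`
    (hxp : ∃ αp : EuclideanSpace ℝ (Fin n), (∀ i ∉ Ttil, αp i = 0) ∧
      xp = Matrix.toEuclideanLin D αp ∧
      ∀ β : EuclideanSpace ℝ (Fin n), (∀ i ∉ Ttil, β i = 0) →
        ‖y - Matrix.toEuclideanLin M xp‖ ≤
          ‖y - Matrix.toEuclideanLin M (Matrix.toEuclideanLin D β)‖)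
    -- `S` is a near-optimal support selection scheme with constant `C`
    (C : ℝ) (hC : 0 ≤ C) (S : EuclideanSpace ℝ (Fin d) → Finset (Fin n))
    (hSnear : ∀ z v : EuclideanSpace ℝ (Fin d),
      (∃ β : EuclideanSpace ℝ (Fin n), sparse k β ∧ v = Matrix.toEuclideanLin D β) →
        ‖z - projOnto (colSpan D (S z)) z‖ ^ 2 ≤ C * ‖v - z‖ ^ 2)
    (xt : EuclideanSpace ℝ (Fin d)) (hxt : xt = projOnto (colSpan D (S xp)) xp) :
    ‖xt - x‖ ≤
      (1 + Real.sqrt C) / Real.sqrt (1 - δ ^ 2) *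
          ‖(xp - x) - projOnto (colSpan D Ttil) (xp - x)‖ +
        (1 + Real.sqrt C) / (1 - δ) *
          (⨆ T' : {T' : Finset (Fin n) // T'.card ≤ 3 * ζ * k},
            ‖projOnto (colSpan D (T' : Finset (Fin n))) (Matrix.toEuclideanLin Mᴴ e)‖) := by
  obtain ⟨αp, hαp, hxpD, hmin⟩ := hxp
  subst hy hxt
  set K := colSpan D Ttil
  set V := colSpan D (Ttil ∪ T)
  set E := ⨆ T' : {T' : Finset (Fin n) // T'.card ≤ 3 * ζ * k},
    ‖projOnto (colSpan D (T' : Finset (Fin n))) (Matrix.toEuclideanLin Mᴴ e)‖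
  have hxpK : xp ∈ K := hxpD ▸ toEuclideanLin_mem_colSpan D hαp
  have hKV : K ≤ V := colSpan_mono D Finset.subset_union_left
  have hxV : x ∈ V :=
    colSpan_mono D Finset.subset_union_right (hx ▸ toEuclideanLin_mem_colSpan D hα)
  have hRIP : RIPOn (Matrix.toEuclideanLin M) V δ := hrip.ripOn_colSpan <|
    (Finset.card_union_le _ _).trans (by nlinarith)
  have hPE : ‖K.starProjection (Matrix.toEuclideanLin Mᴴ e)‖ ≤ E :=
    le_ciSup (f := fun T' : {T' : Finset (Fin n) // T'.card ≤ 3 * ζ * k} =>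
      ‖projOnto (colSpan D (T' : Finset (Fin n))) (Matrix.toEuclideanLin Mᴴ e)‖)
      (Set.finite_range _).bddAbove ⟨Ttil, hTtil⟩
  set u := K.starProjection (xp - x)
  set w := xp - x - u
  have huK : u ∈ K := K.starProjection_apply_mem _
  have huw : u + w = xp - x := add_sub_cancel _ _
  have hcorr : ⟪Matrix.toEuclideanLin M u, Matrix.toEuclideanLin M (u + w)⟫ ≤ ‖u‖ * E := by
    rw [huw]
    rw [Matrix.toEuclideanLin_conjTranspose_eq_adjoint] at hPE
    refine (inner_map_sub_le_of_forall_norm_le hxpK (fun v hv => ?_) huK).trans (by gcongr)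
    obtain ⟨β, hβ, rfl⟩ := mem_colSpan_iff.mp hv
    exact hmin β hβ
  have hz := hRIP.norm_add_le_of_inner_le hδ (hKV huK)
    (V.sub_mem (V.sub_mem (hKV hxpK) hxV) (hKV huK))
    (by rw [real_inner_comm]; exact K.starProjection_inner_eq_zero _ u huK)
    ((norm_nonneg _).trans hPE) hcorr
  rw [huw] at hz
  calc ‖projOnto (colSpan D (S xp)) xp - x‖ ≤ (1 + √C) * ‖xp - x‖ :=
        norm_sub_le_one_add_sqrt_mul hC (hSnear xp x ⟨α, sparse_of_supported hα hT, hx⟩)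
    _ ≤ (1 + √C) * (‖w‖ / √(1 - δ ^ 2) + E / (1 - δ)) := by gcongr
    _ = _ := by rw [show xp - x - projOnto K (xp - x) = w from rfl]; ring

/-- Under the D-RIP with constant `δ = δ_{(3ζ+1)k} < 1`, if `x_p` solves the
constrained least squares on `T̃^t` and `x^t = P_{S_{ζk}(x_p)} x_p` for a near-optimal support
selection `S_{ζk}` with constant `C_k`, then
`‖x^t − x‖ ≤ ((1+√C_k)/√(1−δ²))‖Q_{T̃^t}(x_p − x)‖ + ((1+√C_k)/(1−δ))‖P_{T_e}M*e‖`. -/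
theorem stmt14 {m d n ζ k : ℕ} (hζ : 1 ≤ ζ)
    (M : Matrix (Fin m) (Fin d) ℝ) (D : Matrix (Fin d) (Fin n) ℝ)
    (δ : ℝ) (hδ : δ < 1) (hrip : DRIP M D ((3 * ζ + 1) * k) δ)
    (T : Finset (Fin n)) (hT : T.card ≤ k)
    (α : EuclideanSpace ℝ (Fin n)) (hα : ∀ i ∉ T, α i = 0)
    (x : EuclideanSpace ℝ (Fin d)) (hx : x = Matrix.toEuclideanLin D α)
    (e : EuclideanSpace ℝ (Fin m)) (y : EuclideanSpace ℝ (Fin m))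
    (hy : y = Matrix.toEuclideanLin M x + e)
    (Ttil : Finset (Fin n)) (hTtil : Ttil.card ≤ 3 * ζ * k)
    (xp : EuclideanSpace ℝ (Fin d))
    -- `x_p` is a minimizer of the constrained least-squares problem on `T̃^t`
    (hxp : ∃ αp : EuclideanSpace ℝ (Fin n), (∀ i ∉ Ttil, αp i = 0) ∧
      xp = Matrix.toEuclideanLin D αp ∧
      ∀ β : EuclideanSpace ℝ (Fin n), (∀ i ∉ Ttil, β i = 0) →
        ‖y - Matrix.toEuclideanLin M xp‖ ≤
          ‖y - Matrix.toEuclideanLin M (Matrix.toEuclideanLin D β)‖)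
    -- `S` is a near-optimal support selection scheme with constant `C`
    (C : ℝ) (hC : 0 ≤ C) (S : EuclideanSpace ℝ (Fin d) → Finset (Fin n))
    (hScard : ∀ z, (S z).card ≤ ζ * k)
    (hSnear : ∀ z v : EuclideanSpace ℝ (Fin d),
      (∃ β : EuclideanSpace ℝ (Fin n), sparse k β ∧ v = Matrix.toEuclideanLin D β) →
        ‖z - projOnto (colSpan D (S z)) z‖ ^ 2 ≤ C * ‖v - z‖ ^ 2)
    (xt : EuclideanSpace ℝ (Fin d)) (hxt : xt = projOnto (colSpan D (S xp)) xp) :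
    ‖xt - x‖ ≤
      (1 + Real.sqrt C) / Real.sqrt (1 - δ ^ 2) *
          ‖(xp - x) - projOnto (colSpan D Ttil) (xp - x)‖ +
        (1 + Real.sqrt C) / (1 - δ) *
          (⨆ T' : {T' : Finset (Fin n) // T'.card ≤ 3 * ζ * k},
            ‖projOnto (colSpan D (T' : Finset (Fin n))) (Matrix.toEuclideanLin Mᴴ e)‖) :=
  stmt14_general M D δ hδ hrip T hT α hα x hx e y hy Ttil hTtil xp hxp C hC S hSnear xt hxt

end
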